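/- Suppose for every ordinal 1 ≤ β < α, every game tree with taboos S, every A ∈ Σ⁰_β([S]), and every k there is a k-covering of S unraveling A, and suppose moreover every open subset of the branches of any game tree with taboos can be unraveled by a k-covering for every k. Then for every game tree with taboos T, every A ∈ Σ⁰_α([T]), and every k, there is a k-covering of T that unravels A. -/

import Mathlib

universe u v

/-- A game tree: a nonempty set of finite sequences closed under initial segments. -/
def IsGameTree {X : Type*} (T : Set (List X)) : Prop :=
  T.Nonempty ∧ ∀ ⦃p q : List X⦄, q ∈ T → p <+: q → p ∈ T

/-- A terminal position: a position with no proper extension in the tree. -/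
def IsTerminal {X : Type*} (T : Set (List X)) (p : List X) : Prop :=
  p ∈ T ∧ ∀ a : X, p ++ [a] ∉ T

/-- A pruned game tree has no terminal positions. -/
def IsPruned {X : Type*} (T : Set (List X)) : Prop :=
  ∀ p ∈ T, ∃ a : X, p ++ [a] ∈ T

/-- The game subtree at a position `p`. -/
def subtreeAt {X : Type*} (T : Set (List X)) (p : List X) : Set (List X) :=
  {q | q ∈ T ∧ (q <+: p ∨ p <+: q)}

/-- The initial segment of length `n` of an infinite sequence. -/
def prefixFn {X : Type*} (x : ℕ → X) (n : ℕ) : List X :=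
  List.ofFn fun i : Fin n => x i

/-- The set of infinite branches through a tree. -/
def body {X : Type*} (T : Set (List X)) : Set (ℕ → X) :=
  {x | ∀ n, prefixFn x n ∈ T}

/-- `Turn pl n` holds when it is player `pl`'s turn to move at a position of length `n`
(`true` is player I, moving at even stages, `false` is player II). -/
def Turn (pl : Bool) (n : ℕ) : Prop := if pl then Even n else Odd n

/-- A position is consistent with a strategy `σ` for player `pl` if all the moves of
player `pl` along it follow `σ`. -/
def PosConsistent {X : Type*} (pl : Bool) (σ : List X → X) (p : List X) : Prop :=
  ∀ (k : ℕ) (h : k < p.length), Turn pl k → p.get ⟨k, h⟩ = σ (p.take k)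

/-- An infinite branch is consistent with a strategy `σ` for player `pl` if all the moves of
player `pl` along it follow `σ`. -/
def BranchConsistent {X : Type*} (pl : Bool) (σ : List X → X) (x : ℕ → X) : Prop :=
  ∀ k : ℕ, Turn pl k → x k = σ (prefixFn x k)

/-- `σ` is a (legal) strategy for player `pl` in `T`: at any nonterminal position of `T`
consistent with `σ` where it is `pl`'s turn, it produces a legal move. -/
def IsStrategy {X : Type*} (T : Set (List X)) (pl : Bool) (σ : List X → X) : Prop :=
  ∀ p ∈ T, ¬ IsTerminal T p → Turn pl p.length → PosConsistent pl σ p →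
    p ++ [σ p] ∈ T


/-- A game tree with taboos: a game tree together with a partition of its terminal
positions into taboos for player I and taboos for player II. -/
structure TabooTree (X : Type*) where
  T : Set (List X)
  isTree : IsGameTree T
  tabooI : Set (List X)
  tabooII : Set (List X)
  tabooI_terminal : ∀ p ∈ tabooI, IsTerminal T p
  tabooII_terminal : ∀ p ∈ tabooII, IsTerminal T p
  taboo_disjoint : Disjoint tabooI tabooII
  taboo_cover : ∀ p, IsTerminal T p → p ∈ tabooI ∪ tabooII

/-- `σ` is a winning strategy for player I in the game with payoff `A` on the tree `T`
whose taboos for player II are `tabooII`: every finite play (terminal position)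
consistent with `σ` is a taboo for II, and every infinite play consistent with `σ` is in `A`. -/
def WinsI {X : Type*} (T tabooII : Set (List X)) (A : Set (ℕ → X)) (σ : List X → X) : Prop :=
  IsStrategy T true σ ∧
  (∀ p, IsTerminal T p → PosConsistent true σ p → p ∈ tabooII) ∧
  (∀ x ∈ body T, BranchConsistent true σ x → x ∈ A)

/-- `τ` is a winning strategy for player II: every finite play consistent with `τ` is a
taboo for I, and every infinite play consistent with `τ` is outside `A`. -/
def WinsII {X : Type*} (T tabooI : Set (List X)) (A : Set (ℕ → X)) (τ : List X → X) : Prop :=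
  IsStrategy T false τ ∧
  (∀ p, IsTerminal T p → PosConsistent false τ p → p ∈ tabooI) ∧
  (∀ x ∈ body T, BranchConsistent false τ x → x ∉ A)

/-- Determinacy of the game on tree `T` with taboos `tI`, `tII` and payoff `A`. -/
def DeterminedOn {X : Type*} (T tI tII : Set (List X)) (A : Set (ℕ → X)) : Prop :=
  (∃ σ, WinsI T tII A σ) ∨ (∃ τ, WinsII T tI A τ)

/-- Determinacy of the game with taboos `G(A; M)`. -/
def Determined {X : Type*} (M : TabooTree X) (A : Set (ℕ → X)) : Prop :=
  DeterminedOn M.T M.tabooI M.tabooII A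


/-- The tree topology on infinite sequences: the product topology of the discrete topology. -/
def treeTopology (X : Type*) : TopologicalSpace (ℕ → X) :=
  @Pi.topologicalSpace ℕ (fun _ => X) (fun _ => ⊥)

/-- `A` is (relatively) open in the branch space `[T]`. -/
def RelOpen {X : Type*} (T : Set (List X)) (A : Set (ℕ → X)) : Prop :=
  ∃ U : Set (ℕ → X), @IsOpen _ (treeTopology X) U ∧ A = U ∩ body T

/-- `A` is (relatively) closed in the branch space `[T]`. -/
def RelClosed {X : Type*} (T : Set (List X)) (A : Set (ℕ → X)) : Prop :=
  ∃ C : Set (ℕ → X), @IsClosed _ (treeTopology X) C ∧ A = C ∩ body T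

/-- `A` is (relatively) clopen in the branch space `[T]`. -/
def RelClopen {X : Type*} (T : Set (List X)) (A : Set (ℕ → X)) : Prop :=
  RelOpen T A ∧ RelClosed T A


/-- The additive Borel classes `Σ⁰_o` of the tree topology: `Σ⁰_o` contains the open sets,
and countable unions of sets whose complements are in `Σ⁰_β` for ordinals `1 ≤ β < o`. -/
inductive SigmaMem (X : Type*) : Ordinal.{0} → Set (ℕ → X) → Prop where
  | isOpen (o : Ordinal.{0}) (A : Set (ℕ → X)) :
      @IsOpen _ (treeTopology X) A → SigmaMem X o A
  | iUnion (o : Ordinal.{0}) (f : ℕ → Set (ℕ → X)) (β : ℕ → Ordinal.{0}) :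
      (∀ n, 1 ≤ β n) → (∀ n, β n < o) → (∀ n, SigmaMem X (β n) (f n)ᶜ) →
      SigmaMem X o (⋃ n, f n)


/-- A play of a game tree: either a finite play (a terminal position) or an infinite play. -/
inductive Play (X : Type*) where
  | fin : List X → Play X
  | inf : (ℕ → X) → Play X

/-- `x` is a play of the tree `T`. -/
def IsPlay {X : Type*} (T : Set (List X)) : Play X → Prop
  | .fin p => IsTerminal T p
  | .inf x => x ∈ body T

/-- A play is consistent with the strategy `σ` of player `pl`. -/
def PlayConsistent {X : Type*} (pl : Bool) (σ : List X → X) : Play X → Prop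
  | .fin p => PosConsistent pl σ p
  | .inf x => BranchConsistent pl σ x

/-- A play is a taboo for player `pl`. -/
def PlayTabooFor {X : Type*} (M : TabooTree X) (pl : Bool) : Play X → Prop
  | .fin p => p ∈ (if pl then M.tabooI else M.tabooII)
  | .inf _ => False

/-- A play is an initial segment of another. -/
def Play.le {X : Type*} : Play X → Play X → Prop
  | .fin p, .fin q => p <+: q
  | .fin p, .inf x => p = prefixFn x p.length
  | .inf _, .fin _ => False
  | .inf x, .inf y => x = y

/-- The map on infinite sequences induced by a monotone, length-preserving map on positions. -/
noncomputable def bodyMap {X Y : Type*} [Nonempty X] (π : List Y → List X)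
    (x : ℕ → Y) : ℕ → X :=
  fun n => (π (prefixFn x (n + 1))).getD n (Classical.arbitrary X)

/-- The map on plays induced by a position map. -/
noncomputable def Play.map {X Y : Type*} [Nonempty X] (π : List Y → List X) :
    Play Y → Play X
  | .fin p => .fin (π p)
  | .inf x => .inf (bodyMap π x)


/-- A covering of the game tree with taboos `M` by the game tree with taboos `Tc`:
a position map `π` (monotone, length-preserving, and pulling taboos back to taboos for the
same player) and a strategy map `φ` (mapping strategies to strategies for the same player,
with finite dependence on its argument) satisfying the lifting condition. -/
structure Covering {X Y : Type*} [Nonempty X] (Tc : TabooTree Y) (M : TabooTree X) where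
  π : List Y → List X
  π_maps : ∀ p ∈ Tc.T, π p ∈ M.T
  π_mono : ∀ p q : List Y, p ∈ Tc.T → q ∈ Tc.T → p <+: q → π p <+: π q
  π_len : ∀ p ∈ Tc.T, (π p).length = p.length
  π_tabooI : ∀ p ∈ Tc.T, π p ∈ M.tabooI → p ∈ Tc.tabooI
  π_tabooII : ∀ p ∈ Tc.T, π p ∈ M.tabooII → p ∈ Tc.tabooII
  φ : Bool → (List Y → Y) → (List X → X)
  φ_strategy : ∀ pl σ, IsStrategy Tc.T pl σ → IsStrategy M.T pl (φ pl σ)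
  φ_local : ∀ (pl : Bool) (n : ℕ) (σ σ' : List Y → Y),
      (∀ p : List Y, p.length < n → σ p = σ' p) →
      ∀ q : List X, q.length < n → φ pl σ q = φ pl σ' q
  lifting : ∀ (pl : Bool) (σ : List Y → Y), IsStrategy Tc.T pl σ →
      ∀ x : Play X, IsPlay M.T x → PlayConsistent pl (φ pl σ) x →
        ∃ xt : Play Y, IsPlay Tc.T xt ∧ PlayConsistent pl σ xt ∧
          Play.le (Play.map π xt) x ∧
          (Play.map π xt = x ∨ PlayTabooFor Tc pl xt)


/-- A `k`-covering: the two trees (and their taboos) agree on all positions of length ≤ `k`,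
and the position and strategy maps are the identity up to level `k`. -/
def IsKCovering {X : Type*} [Nonempty X] {Tc M : TabooTree X} (k : ℕ)
    (C : Covering Tc M) : Prop :=
  (∀ p : List X, p.length ≤ k → (p ∈ Tc.T ↔ p ∈ M.T)) ∧
  (∀ p : List X, p.length ≤ k → (p ∈ Tc.tabooI ↔ p ∈ M.tabooI)) ∧
  (∀ p : List X, p.length ≤ k → (p ∈ Tc.tabooII ↔ p ∈ M.tabooII)) ∧
  (∀ p ∈ Tc.T, p.length ≤ k → C.π p = p) ∧
  (∀ (pl : Bool) (σ : List X → X) (p : List X), p.length < k → C.φ pl σ p = σ p)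


/-- A covering unravels `A` if the preimage of `A` under the induced map on branches
is clopen in the branch space of the covering tree. -/
def Unravels {X Y : Type*} [Nonempty X] {Tc : TabooTree Y} {M : TabooTree X}
    (C : Covering Tc M) (A : Set (ℕ → X)) : Prop :=
  RelClopen Tc.T (bodyMap C.π ⁻¹' A ∩ body Tc.T)

/-!
Write `A = ⋃ₙ Aₙ` with every `Aₙᶜ` of a class `Σ⁰_β`, `β < α`. Starting from `M`, unravel the
pullback of `Aₙᶜ` to the current tree by a `(k + n + 1)`-covering of it. These coverings fix
ever longer initial segments, so they have an inverse limit, which is a `k`-covering of `M` in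
which every `Aₙ` pulls back to a clopen set. The pullback of `A` is then open, and one more
`k`-covering unravels it.

In the limit, a strategy is pushed down to level `m` through the strategy maps of the coverings,
after being made legal at a finite level; a play of `M` consistent with the pushed strategy is
lifted level by level, and the lifts either become eventually constant finite plays or converge
to a branch of the limit tree.
-/

theorem exists_seq_of_forall_exists {α : Type*} {P : ℕ → α → Prop}
    {R : ℕ → α → α → Prop} {a : α} (ha : P 0 a)
    (h : ∀ n a, P n a → ∃ b, P (n + 1) b ∧ R n a b) :
    ∃ f : ℕ → α, f 0 = a ∧ ∀ n, P n (f n) ∧ R n (f n) (f (n + 1)) := by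
  choose g hg using h
  let F : ∀ n, {b // P n b} :=
    fun n => Nat.rec ⟨a, ha⟩ (fun n b => ⟨g n b.1 b.2, (hg n b.1 b.2).1⟩) n
  exact ⟨fun n => (F n).1, rfl, fun n => ⟨(F n).2, (hg n _ (F n).2).2⟩⟩

section Sequences

variable {X : Type*}

@[simp]
theorem length_prefixFn (x : ℕ → X) (n : ℕ) : (prefixFn x n).length = n := by
  simp [prefixFn]

@[simp]
theorem getElem_prefixFn (x : ℕ → X) {n i : ℕ} (h : i < (prefixFn x n).length) :
    (prefixFn x n)[i] = x i := by
  simp [prefixFn]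

theorem getD_prefixFn (x : ℕ → X) {n i : ℕ} (h : i < n) (d : X) :
    (prefixFn x n).getD i d = x i := by
  rw [List.getD_eq_getElem _ _ (by simpa using h), getElem_prefixFn]

theorem eq_prefixFn_iff {x : ℕ → X} {p : List X} {n : ℕ} :
    p = prefixFn x n ↔ p.length = n ∧ ∀ i (h : i < p.length), p[i] = x i := by
  constructor
  · rintro rfl
    exact ⟨length_prefixFn x n, fun i h => getElem_prefixFn x h⟩
  · rintro ⟨rfl, h⟩
    exact List.ext_getElem (by simp) fun i h₁ _ => by rw [h i h₁, getElem_prefixFn]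

theorem take_prefixFn (x : ℕ → X) {m n : ℕ} (h : m ≤ n) :
    (prefixFn x n).take m = prefixFn x m :=
  List.ext_getElem (by simpa using h) fun i _ _ => by simp

theorem prefixFn_prefix_prefixFn (x : ℕ → X) {m n : ℕ} (h : m ≤ n) :
    prefixFn x m <+: prefixFn x n :=
  take_prefixFn x h ▸ List.take_prefix _ _

end Sequences

section Trees

variable {X : Type*} {T : Set (List X)}

theorem IsGameTree.nil_mem (hT : IsGameTree T) : [] ∈ T :=
  let ⟨_, hw⟩ := hT.1
  hT.2 hw List.nil_prefix

theorem IsGameTree.not_isTerminal_of_isPrefix (hT : IsGameTree T) {p q : List X}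
    (hq : q ∈ T) (hpq : p <+: q) (hl : p.length < q.length) : ¬ IsTerminal T p := by
  rintro ⟨-, h⟩
  apply h q[p.length]
  have hp : p = q.take p.length := List.prefix_iff_eq_take.1 hpq
  have hsucc : p ++ [q[p.length]] = q.take (p.length + 1) := by
    rw [List.take_add_one, List.getElem?_eq_getElem hl, ← hp]
    rfl
  exact hsucc ▸ hT.2 hq (List.take_prefix _ _)

theorem posConsistent_congr {pl : Bool} {σ σ' : List X → X} {p : List X}
    (h : ∀ r : List X, r.length < p.length → σ r = σ' r) :
    PosConsistent pl σ p ↔ PosConsistent pl σ' p := by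
  refine forall_congr' fun i => forall_congr' fun hi => forall_congr' fun _ => ?_
  rw [h (p.take i) (by simp; omega)]

end Trees

section Consistency

variable {X : Type*} {pl : Bool} {σ τ : List X → X}

theorem branchConsistent_iff_forall_posConsistent {x : ℕ → X} :
    BranchConsistent pl σ x ↔ ∀ n, PosConsistent pl σ (prefixFn x n) := by
  constructor
  · intro h n i hi hturn
    rw [List.get_eq_getElem, getElem_prefixFn, take_prefixFn x (by simpa using hi.le)]
    exact h i hturn
  · intro h i hturn
    have := h (i + 1) i (by simp) hturn
    rwa [List.get_eq_getElem, getElem_prefixFn, take_prefixFn x i.le_succ] at this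

/-- By strong induction along `p`: a prefix consistent with `σ` is a position where `σ` moves
legally, so there `τ` makes the same move as `σ`. -/
theorem IsStrategy.posConsistent_of_agree {T : Set (List X)} (hT : IsGameTree T)
    (hσ : IsStrategy T pl σ) {p : List X} (hp : p ∈ T)
    (hagree : ∀ r : List X, r.length < p.length → r ++ [σ r] ∈ T → τ r = σ r)
    (hτ : PosConsistent pl τ p) : PosConsistent pl σ p := by
  intro i
  induction i using Nat.strong_induction_on with
  | _ i ih =>
    intro hi hturn
    have hlen : (p.take i).length = i := by simp; omega
    have hcons : PosConsistent pl σ (p.take i) := by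
      intro j hj hturn'
      rw [hlen] at hj
      simpa [List.take_take, Nat.min_eq_left hj.le] using ih j hj (by omega) hturn'
    have hmove := hσ (p.take i) (hT.2 hp (List.take_prefix i p))
      (hT.not_isTerminal_of_isPrefix hp (List.take_prefix i p) (by omega))
      (by rw [hlen]; exact hturn) hcons
    rw [hτ i hi hturn, hagree _ (by omega) hmove]

end Consistency

structure IsTreeMap {X Y : Type*} (g : List Y → List X) (T' : Set (List Y))
    (T : Set (List X)) : Prop where
  maps : ∀ p ∈ T', g p ∈ T
  mono : ∀ p q, p ∈ T' → q ∈ T' → p <+: q → g p <+: g q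
  len : ∀ p ∈ T', (g p).length = p.length

section TreeMaps

variable {X Y Z : Type*} {T : Set (List X)} {T' : Set (List Y)} {g : List Y → List X}

theorem IsTreeMap.id : IsTreeMap (fun p : List X => p) T T :=
  ⟨fun _ hp => hp, fun _ _ _ _ h => h, fun _ _ => rfl⟩

theorem IsTreeMap.comp {T'' : Set (List Z)} {h : List Z → List Y} (hg : IsTreeMap g T' T)
    (hh : IsTreeMap h T'' T') : IsTreeMap (fun p => g (h p)) T'' T :=
  ⟨fun p hp => hg.maps _ (hh.maps p hp),
   fun p q hp hq hpq => hg.mono _ _ (hh.maps p hp) (hh.maps q hq) (hh.mono p q hp hq hpq),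
   fun p hp => by rw [hg.len _ (hh.maps p hp), hh.len p hp]⟩

theorem IsTreeMap.prefixFn_bodyMap [Nonempty X] (hg : IsTreeMap g T' T) {y : ℕ → Y}
    (hy : y ∈ body T') (n : ℕ) : prefixFn (bodyMap g y) n = g (prefixFn y n) := by
  have hlen : ∀ l, (g (prefixFn y l)).length = l := fun l => by
    rw [hg.len _ (hy l), length_prefixFn]
  refine (eq_prefixFn_iff.2 ⟨hlen n, fun i hi => ?_⟩).symm
  rw [hlen] at hi
  have hpre : g (prefixFn y (i + 1)) <+: g (prefixFn y n) :=
    hg.mono _ _ (hy _) (hy _) (prefixFn_prefix_prefixFn y hi)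
  rw [bodyMap, List.getD_eq_getElem _ _ (by rw [hlen]; omega)]
  exact (hpre.getElem _).symm

theorem IsTreeMap.bodyMap_mem_body [Nonempty X] (hg : IsTreeMap g T' T) {y : ℕ → Y}
    (hy : y ∈ body T') : bodyMap g y ∈ body T :=
  fun n => hg.prefixFn_bodyMap hy n ▸ hg.maps _ (hy n)

theorem bodyMap_congr [Nonempty X] {g g' : List Y → List X} {y : ℕ → Y} (hy : y ∈ body T')
    (h : ∀ p ∈ T', g p = g' p) : bodyMap g y = bodyMap g' y :=
  funext fun n => by rw [bodyMap, bodyMap, h _ (hy _)]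

theorem preimage_bodyMap_congr [Nonempty X] {g g' : List Y → List X} {A : Set (ℕ → X)}
    (h : ∀ p ∈ T', g p = g' p) :
    bodyMap g ⁻¹' A ∩ body T' = bodyMap g' ⁻¹' A ∩ body T' := by
  ext y
  simp only [Set.mem_inter_iff, Set.mem_preimage]
  exact and_congr_left fun hy => by rw [bodyMap_congr hy h]

theorem bodyMap_id [Nonempty X] (y : ℕ → X) : bodyMap (fun p : List X => p) y = y :=
  funext fun _ => getD_prefixFn _ (Nat.lt_succ_self _) _

theorem IsTreeMap.bodyMap_comp [Nonempty X] [Nonempty Z] (hg : IsTreeMap g T' T)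
    (h : List X → List Z) {y : ℕ → Y} (hy : y ∈ body T') :
    bodyMap (fun p => h (g p)) y = bodyMap h (bodyMap g y) :=
  funext fun n => by rw [bodyMap, bodyMap, hg.prefixFn_bodyMap hy]

theorem IsTreeMap.preimage_inter_body [Nonempty X] (hg : IsTreeMap g T' T) (A : Set (ℕ → X)) :
    bodyMap g ⁻¹' (A ∩ body T) ∩ body T' = bodyMap g ⁻¹' A ∩ body T' := by
  ext y
  simp only [Set.mem_inter_iff, Set.mem_preimage]
  exact ⟨fun h => ⟨h.1.1, h.2⟩, fun h => ⟨⟨h.1, hg.bodyMap_mem_body h.2⟩, h.2⟩⟩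

theorem IsTreeMap.preimage_comp [Nonempty X] [Nonempty Z] (hg : IsTreeMap g T' T)
    (h : List X → List Z) (A : Set (ℕ → Z)) :
    bodyMap g ⁻¹' (bodyMap h ⁻¹' A ∩ body T) ∩ body T' =
      bodyMap (fun p => h (g p)) ⁻¹' A ∩ body T' := by
  rw [hg.preimage_inter_body]
  ext y
  simp only [Set.mem_inter_iff, Set.mem_preimage]
  exact and_congr_left fun hy => by rw [hg.bodyMap_comp h hy]

end TreeMaps

section Topology

variable {X Y : Type*}

theorem continuous_prefixFn (n : ℕ) :
    @Continuous _ _ (treeTopology X) ⊥ fun y : ℕ → X => prefixFn y n := by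
  let _ : TopologicalSpace X := ⊥
  have : DiscreteTopology X := ⟨rfl⟩
  let _ : TopologicalSpace (List X) := ⊥
  have : DiscreteTopology (List X) := ⟨rfl⟩
  have hres : Continuous fun y : ℕ → X => fun i : Fin n => y i :=
    continuous_pi fun i => continuous_apply (i : ℕ)
  exact (continuous_of_discreteTopology (f := List.ofFn)).comp hres

theorem continuous_bodyMap [Nonempty X] (g : List Y → List X) :
    @Continuous _ _ (treeTopology Y) (treeTopology X) (bodyMap g) := by
  let _ : TopologicalSpace Y := ⊥
  let _ : TopologicalSpace (List Y) := ⊥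
  have : DiscreteTopology (List Y) := ⟨rfl⟩
  let _ : TopologicalSpace X := ⊥
  change Continuous (bodyMap g)
  exact continuous_pi fun n =>
    (continuous_of_discreteTopology (f := fun p => (g p).getD n (Classical.arbitrary X))).comp
      (continuous_prefixFn (n + 1))

theorem SigmaMem.preimage {f : (ℕ → Y) → (ℕ → X)}
    (hf : @Continuous _ _ (treeTopology Y) (treeTopology X) f)
    {o : Ordinal.{0}} {B : Set (ℕ → X)} (hB : SigmaMem X o B) : SigmaMem Y o (f ⁻¹' B) := by
  induction hB with
  | isOpen o A hA =>
    exact .isOpen o _ (@IsOpen.preimage _ _ (treeTopology Y) (treeTopology X) f hf _ hA)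
  | iUnion o B β hβ₁ hβ _ ih =>
    rw [Set.preimage_iUnion]
    exact .iUnion o _ β hβ₁ hβ fun n => Set.preimage_compl (f := f) ▸ ih n

theorem relOpen_iUnion_inter_body {T : Set (List X)} {A : ℕ → Set (ℕ → X)}
    (h : ∀ n, RelOpen T (A n ∩ body T)) : RelOpen T ((⋃ n, A n) ∩ body T) := by
  choose U hU hUA using h
  refine ⟨⋃ n, U n, @isOpen_iUnion _ _ (treeTopology X) _ hU, ?_⟩
  rw [Set.iUnion_inter, Set.iUnion_inter]
  exact Set.iUnion_congr hUA

theorem RelClopen.compl_inter_body {T : Set (List X)} {D : Set (ℕ → X)}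
    (h : RelClopen T (D ∩ body T)) : RelClopen T (Dᶜ ∩ body T) := by
  let _ := treeTopology X
  have hcompl : ∀ V, D ∩ body T = V ∩ body T → Dᶜ ∩ body T = Vᶜ ∩ body T := fun V hV => by
    rw [Set.inter_comm, ← Set.sdiff_eq, ← Set.sdiff_inter_self_eq_sdiff, hV,
      Set.sdiff_inter_self_eq_sdiff, Set.sdiff_eq, Set.inter_comm]
  obtain ⟨⟨U, hU, hUD⟩, ⟨F, hF, hFD⟩⟩ := h
  exact ⟨⟨Fᶜ, hF.isOpen_compl, hcompl F hFD⟩, ⟨Uᶜ, hU.isClosed_compl, hcompl U hUD⟩⟩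

theorem RelClopen.preimage_bodyMap [Nonempty X] {T : Set (List X)} {T' : Set (List Y)}
    {g : List Y → List X} (hg : IsTreeMap g T' T) {D : Set (ℕ → X)} (h : RelClopen T D) :
    RelClopen T' (bodyMap g ⁻¹' D ∩ body T') := by
  let _ := treeTopology X
  let _ := treeTopology Y
  obtain ⟨⟨U, hU, rfl⟩, ⟨F, hF, hFD⟩⟩ := h
  have hc : Continuous (bodyMap g) := continuous_bodyMap g
  refine ⟨⟨bodyMap g ⁻¹' U, hU.preimage hc, hg.preimage_inter_body U⟩,
    ⟨bodyMap g ⁻¹' F, hF.preimage hc, ?_⟩⟩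
  rw [hFD, hg.preimage_inter_body]

end Topology

namespace Play

variable {X Y Z : Type*}

theorem le_refl (w : Play X) : w.le w := by
  cases w with
  | fin p => exact List.prefix_refl p
  | inf y => exact rfl

theorem le_trans {u v w : Play X} (h₁ : u.le v) (h₂ : v.le w) : u.le w := by
  match u, v, w, h₁, h₂ with
  | .fin _, .fin _, .fin _, h₁, h₂ => exact List.IsPrefix.trans h₁ h₂
  | .fin p, .fin q, .inf y, h₁, h₂ =>
    change p <+: q at h₁
    change q = prefixFn y q.length at h₂
    refine eq_prefixFn_iff.2 ⟨rfl, fun i hi => ?_⟩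
    rw [h₁.getElem hi, List.getElem_of_eq h₂, getElem_prefixFn]
  | .fin _, .inf _, .inf _, h₁, h₂ => exact (h₂ : _ = _) ▸ h₁
  | .inf _, .inf _, .inf _, h₁, h₂ => exact (h₁ : _ = _).trans h₂

theorem exists_eq_fin_of_le_fin {w : Play X} {p : List X} (h : w.le (.fin p)) :
    ∃ q, w = .fin q := by
  cases w with
  | fin q => exact ⟨q, rfl⟩
  | inf _ => exact h.elim

theorem map_eq_fin [Nonempty X] {g : List Y → List X} {w : Play Y} {q : List X}
    (h : w.map g = .fin q) : ∃ p, w = .fin p ∧ g p = q := by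
  cases w with
  | fin p => exact ⟨p, rfl, Play.fin.inj h⟩
  | inf _ => cases h

theorem map_le_map [Nonempty X] {T : Set (List X)} {T' : Set (List Y)} {g : List Y → List X}
    (hg : IsTreeMap g T' T) {w w' : Play Y} (hw : ∀ p, w = .fin p → p ∈ T')
    (hw' : IsPlay T' w') (h : w.le w') : (w.map g).le (w'.map g) := by
  match w, w', h with
  | .fin p, .fin q, h => exact hg.mono p q (hw p rfl) hw'.1 h
  | .fin p, .inf y, h =>
    change p = prefixFn y p.length at h
    change g p = prefixFn (bodyMap g y) (g p).length
    rw [hg.prefixFn_bodyMap hw', hg.len p (hw p rfl), ← h]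
  | .inf _, .inf _, h => exact congrArg (bodyMap g) h

theorem map_id [Nonempty X] (w : Play X) : w.map (fun p => p) = w := by
  cases w with
  | fin p => rfl
  | inf y => exact congrArg Play.inf (bodyMap_id y)

theorem map_comp [Nonempty X] [Nonempty Z] {T : Set (List X)} {T' : Set (List Y)}
    {g : List Y → List X} (hg : IsTreeMap g T' T) (h : List X → List Z) {w : Play Y}
    (hw : IsPlay T' w) : w.map (fun p => h (g p)) = (w.map g).map h := by
  cases w with
  | fin p => rfl
  | inf y => exact congrArg Play.inf (hg.bodyMap_comp h hw)

end Play

namespace Covering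

variable {X Y Z : Type*} [Nonempty X] {Tc : TabooTree Y} {M : TabooTree X}

theorem isTreeMap (C : Covering Tc M) : IsTreeMap C.π Tc.T M.T :=
  ⟨C.π_maps, C.π_mono, C.π_len⟩

theorem playTabooFor_fin (C : Covering Tc M) {pl : Bool} {p : List Y} (hp : p ∈ Tc.T)
    (h : PlayTabooFor M pl (.fin (C.π p))) : PlayTabooFor Tc pl (.fin p) := by
  cases pl
  · exact C.π_tabooII p hp h
  · exact C.π_tabooI p hp h

theorem playTabooFor_of_map_eq (C : Covering Tc M) {pl : Bool} {w : Play Y} (hw : IsPlay Tc.T w)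
    {x : Play X} (hwx : w.map C.π = x) (hx : PlayTabooFor M pl x) : PlayTabooFor Tc pl w := by
  cases x with
  | inf _ => exact hx.elim
  | fin q =>
    obtain ⟨p, rfl, rfl⟩ := Play.map_eq_fin hwx
    exact C.playTabooFor_fin hw.1 hx

variable [Nonempty Y] {T₂ : TabooTree Z} {T₁ : TabooTree Y} {T₀ : TabooTree X}

noncomputable def comp (C₂ : Covering T₂ T₁) (C₁ : Covering T₁ T₀) :
    Covering T₂ T₀ where
  π p := C₁.π (C₂.π p)
  π_maps := (C₁.isTreeMap.comp C₂.isTreeMap).maps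
  π_mono := (C₁.isTreeMap.comp C₂.isTreeMap).mono
  π_len := (C₁.isTreeMap.comp C₂.isTreeMap).len
  π_tabooI p hp h := C₂.π_tabooI p hp (C₁.π_tabooI _ (C₂.π_maps p hp) h)
  π_tabooII p hp h := C₂.π_tabooII p hp (C₁.π_tabooII _ (C₂.π_maps p hp) h)
  φ pl σ := C₁.φ pl (C₂.φ pl σ)
  φ_strategy pl σ hσ := C₁.φ_strategy pl _ (C₂.φ_strategy pl σ hσ)
  φ_local pl n σ σ' h := C₁.φ_local pl n _ _ (C₂.φ_local pl n σ σ' h)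
  lifting := by
    intro pl σ hσ x hx hcons
    obtain ⟨x₁, hx₁, hcons₁, hle₁, hex₁⟩ :=
      C₁.lifting pl _ (C₂.φ_strategy pl σ hσ) x hx hcons
    obtain ⟨x₂, hx₂, hcons₂, hle₂, hex₂⟩ := C₂.lifting pl σ hσ x₁ hx₁ hcons₁
    have hmap : x₂.map (fun p => C₁.π (C₂.π p)) = (x₂.map C₂.π).map C₁.π :=
      Play.map_comp C₂.isTreeMap _ hx₂
    have hpos : ∀ p, x₂.map C₂.π = .fin p → p ∈ T₁.T := by
      intro p hp
      obtain ⟨q, rfl, rfl⟩ := Play.map_eq_fin hp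
      exact C₂.π_maps q hx₂.1
    refine ⟨x₂, hx₂, hcons₂,
      hmap ▸ Play.le_trans (Play.map_le_map C₁.isTreeMap hpos hx₁ hle₂) hle₁, ?_⟩
    rcases hex₂ with hex₂ | htab₂
    · rcases hex₁ with hex₁ | htab₁
      · exact .inl (by rw [hmap, hex₂, hex₁])
      · exact .inr (C₂.playTabooFor_of_map_eq hx₂ hex₂ htab₁)
    · exact .inr htab₂

theorem _root_.IsKCovering.comp {T₂ T₁ T₀ : TabooTree X} {C₂ : Covering T₂ T₁}
    {C₁ : Covering T₁ T₀} {k : ℕ} (h₂ : IsKCovering k C₂) (h₁ : IsKCovering k C₁) :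
    IsKCovering k (C₂.comp C₁) := by
  obtain ⟨t₂, i₂, ii₂, π₂, φ₂⟩ := h₂
  obtain ⟨t₁, i₁, ii₁, π₁, φ₁⟩ := h₁
  refine ⟨fun p hp => (t₂ p hp).trans (t₁ p hp), fun p hp => (i₂ p hp).trans (i₁ p hp),
    fun p hp => (ii₂ p hp).trans (ii₁ p hp), fun p hp hl => ?_, fun pl σ p hl => ?_⟩
  · change C₁.π (C₂.π p) = p
    rw [π₂ p hp hl, π₁ p ((t₂ p hl).1 hp) hl]
  · change C₁.φ pl (C₂.φ pl σ) p = σ p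
    rw [φ₁ pl _ p hl, φ₂ pl σ p hl]

theorem _root_.Unravels.comp {C₂ : Covering T₂ T₁} {C₁ : Covering T₁ T₀}
    {A : Set (ℕ → X)} (h : Unravels C₂ (bodyMap C₁.π ⁻¹' A ∩ body T₁.T)) :
    Unravels (C₂.comp C₁) A := by
  change RelClopen _ (bodyMap (fun p => C₁.π (C₂.π p)) ⁻¹' A ∩ _)
  rwa [← C₂.isTreeMap.preimage_comp]

end Covering

section Stabilization

variable {X : Type*} {k : ℕ} {P : ℕ → Set (List X)}

theorem mem_iff_of_stable (hP : ∀ n p, p.length ≤ k + n + 1 → (p ∈ P (n + 1) ↔ p ∈ P n))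
    {p : List X} {m n : ℕ} (hl : p.length ≤ k + m + 1) (hmn : m ≤ n) :
    p ∈ P n ↔ p ∈ P m := by
  induction n, hmn using Nat.le_induction with
  | base => rfl
  | succ n hmn ih => exact (hP n p (by omega)).trans ih

theorem mem_diagonal_iff_of_stable
    (hP : ∀ n p, p.length ≤ k + n + 1 → (p ∈ P (n + 1) ↔ p ∈ P n)) {p : List X}
    {n : ℕ} (hl : p.length ≤ k + n + 1) : p ∈ P p.length ↔ p ∈ P n := by
  rcases le_total p.length n with h | h
  · exact (mem_iff_of_stable hP (by omega) h).symm
  · exact mem_iff_of_stable hP hl h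

end Stabilization

section Legalize

variable {X : Type*} [Nonempty X] {T T' : Set (List X)} {k : ℕ} {σ σ' : List X → X}
  {p : List X}

open Classical in
/-- Moves are left untouched below length `k`, so that the limit covering is a `k`-covering. -/
noncomputable def legalize (T : Set (List X)) (k : ℕ) (σ : List X → X) (p : List X) : X :=
  if k ≤ p.length ∧ p ++ [σ p] ∉ T then Classical.epsilon fun a => p ++ [a] ∈ T else σ p

theorem legalize_of_lt (h : p.length < k) : legalize T k σ p = σ p :=
  if_neg fun h' => (h'.1.not_gt h).elim

theorem legalize_of_mem (h : p ++ [σ p] ∈ T) : legalize T k σ p = σ p :=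
  if_neg fun h' => h'.2 h

theorem append_legalize_mem (hk : k ≤ p.length) (h : ∃ a, p ++ [a] ∈ T) :
    p ++ [legalize T k σ p] ∈ T := by
  by_cases hσ : p ++ [σ p] ∈ T
  · rwa [legalize_of_mem hσ]
  · rw [legalize, if_pos ⟨hk, hσ⟩]
    exact Classical.epsilon_spec h

open Classical in
theorem legalize_congr (hσ : σ p = σ' p) (hT : ∀ a, p ++ [a] ∈ T ↔ p ++ [a] ∈ T') :
    legalize T k σ p = legalize T' k σ' p := by
  have hset : (fun a => p ++ [a] ∈ T) = fun a => p ++ [a] ∈ T' := funext fun a => propext (hT a)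
  unfold legalize
  rw [hσ]
  exact if_congr (and_congr_right' (not_congr (hT _))) (by rw [hset]) rfl

end Legalize

structure CoveringSeq (X : Type*) [Nonempty X] (k : ℕ) where
  S : ℕ → TabooTree X
  C : ∀ n, Covering (S (n + 1)) (S n)
  isKCovering : ∀ n, IsKCovering (k + n + 1) (C n)

namespace CoveringSeq

variable {X : Type*} [Nonempty X] {k : ℕ}

/-- The coverings beyond level `l` are `(k + l + 1)`-coverings, so a position of length `l`
has the same status at all levels `≥ l`. -/
def limT (D : CoveringSeq X k) : Set (List X) := {p | p ∈ (D.S p.length).T}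

def limI (D : CoveringSeq X k) : Set (List X) := {p | p ∈ (D.S p.length).tabooI}

def limII (D : CoveringSeq X k) : Set (List X) := {p | p ∈ (D.S p.length).tabooII}

variable {D : CoveringSeq X k} {pl : Bool} {σ : List X → X}

theorem mem_limT_iff {p : List X} {n : ℕ} (hl : p.length ≤ k + n + 1) :
    p ∈ D.limT ↔ p ∈ (D.S n).T :=
  mem_diagonal_iff_of_stable (P := fun n => (D.S n).T) (fun n => (D.isKCovering n).1) hl

theorem mem_limI_iff {p : List X} {n : ℕ} (hl : p.length ≤ k + n + 1) :
    p ∈ D.limI ↔ p ∈ (D.S n).tabooI :=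
  mem_diagonal_iff_of_stable (P := fun n => (D.S n).tabooI) (fun n => (D.isKCovering n).2.1) hl

theorem mem_limII_iff {p : List X} {n : ℕ} (hl : p.length ≤ k + n + 1) :
    p ∈ D.limII ↔ p ∈ (D.S n).tabooII :=
  mem_diagonal_iff_of_stable (P := fun n => (D.S n).tabooII) (fun n => (D.isKCovering n).2.2.1)
    hl

theorem mem_T_iff_of_le {p : List X} {m n : ℕ} (hl : p.length ≤ k + m + 1) (hmn : m ≤ n) :
    p ∈ (D.S n).T ↔ p ∈ (D.S m).T :=
  (mem_limT_iff (by omega)).symm.trans (mem_limT_iff hl)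

theorem isTerminal_limT_iff {p : List X} {n : ℕ} (hl : p.length ≤ k + n) :
    IsTerminal D.limT p ↔ IsTerminal (D.S n).T p := by
  refine and_congr (mem_limT_iff (by omega)) (forall_congr' fun a => not_congr ?_)
  exact mem_limT_iff (by simp; omega)

theorem limT_isGameTree : IsGameTree D.limT := by
  refine ⟨⟨[], (D.S 0).isTree.nil_mem⟩, fun p q hq hpq => ?_⟩
  have hp : p ∈ (D.S q.length).T := (D.S q.length).isTree.2 hq hpq
  exact (mem_T_iff_of_le (by omega) hpq.length_le).1 hp

def limTree (D : CoveringSeq X k) : TabooTree X where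
  T := D.limT
  isTree := limT_isGameTree
  tabooI := D.limI
  tabooII := D.limII
  tabooI_terminal p hp :=
    (isTerminal_limT_iff (D := D) (n := p.length) (by omega)).2 ((D.S _).tabooI_terminal p hp)
  tabooII_terminal p hp :=
    (isTerminal_limT_iff (D := D) (n := p.length) (by omega)).2 ((D.S _).tabooII_terminal p hp)
  taboo_disjoint := Set.disjoint_left.2 fun p hI hII =>
    Set.disjoint_left.1 (D.S p.length).taboo_disjoint hI hII
  taboo_cover p hp :=
    (D.S p.length).taboo_cover p ((isTerminal_limT_iff (D := D) (n := p.length) (by omega)).1 hp)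

theorem playTabooFor_limTree_iff {p : List X} {n : ℕ} (hl : p.length ≤ k + n + 1) :
    PlayTabooFor D.limTree pl (.fin p) ↔ PlayTabooFor (D.S n) pl (.fin p) := by
  cases pl
  · exact (mem_limII_iff (D := D) hl :)
  · exact (mem_limI_iff (D := D) hl :)

theorem π_eq_self {n : ℕ} {p : List X} (hp : p ∈ D.limT) (hl : p.length ≤ k + n + 1) :
    (D.C n).π p = p :=
  (D.isKCovering n).2.2.2.1 p ((mem_limT_iff (by omega)).1 hp) hl

def proj (D : CoveringSeq X k) (m : ℕ) : ℕ → List X → List X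
  | 0, p => p
  | j + 1, p => D.proj m j ((D.C (m + j)).π p)

/-- The coverings above level `m + p.length` fix `p`, so only `p.length` of them are composed. -/
def limProj (D : CoveringSeq X k) (m : ℕ) (p : List X) : List X := D.proj m p.length p

theorem π_congr {a b : ℕ} (h : a = b) : (D.C a).π = (D.C b).π := by subst h; rfl

theorem φ_congr {a b : ℕ} (h : a = b) : (D.C a).φ = (D.C b).φ := by subst h; rfl

theorem proj_isTreeMap (m j : ℕ) : IsTreeMap (D.proj m j) (D.S (m + j)).T (D.S m).T := by
  induction j with
  | zero => exact IsTreeMap.id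
  | succ j ih => exact ih.comp (D.C (m + j)).isTreeMap

theorem proj_playTabooFor {m j : ℕ} {p : List X} (hp : p ∈ (D.S (m + j)).T)
    (h : PlayTabooFor (D.S m) pl (.fin (D.proj m j p))) :
    PlayTabooFor (D.S (m + j)) pl (.fin p) := by
  induction j generalizing p with
  | zero => exact h
  | succ j ih => exact (D.C (m + j)).playTabooFor_fin hp (ih ((D.C _).π_maps p hp) h)

theorem proj_eq_self {m j : ℕ} {p : List X} (hp : p ∈ D.limT) (hl : p.length ≤ k) :
    D.proj m j p = p := by
  induction j with
  | zero => rfl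
  | succ j ih => rw [proj, π_eq_self hp (by omega), ih]

theorem proj_eq_of_le {m j j' : ℕ} {p : List X} (hp : p ∈ D.limT) (hl : p.length ≤ m + j)
    (hj : j ≤ j') : D.proj m j' p = D.proj m j p := by
  induction j', hj using Nat.le_induction with
  | base => rfl
  | succ j' hj ih => rw [proj, π_eq_self hp (by omega), ih]

theorem proj_proj (m j' j : ℕ) (p : List X) :
    D.proj m j' (D.proj (m + j') j p) = D.proj m (j' + j) p := by
  induction j generalizing p with
  | zero => rfl
  | succ j ih =>
    change D.proj m j' (D.proj (m + j') j ((D.C (m + j' + j)).π p)) =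
      D.proj m (j' + j) ((D.C (m + (j' + j))).π p)
    rw [ih, π_congr (Nat.add_assoc m j' j)]

theorem limProj_isTreeMap (m : ℕ) : IsTreeMap (D.limProj m) D.limT (D.S m).T := by
  have hmem : ∀ {p} j, p ∈ D.limT → p.length ≤ j → p ∈ (D.S (m + j)).T :=
    fun j hp hj => (mem_limT_iff (by omega)).1 hp
  refine ⟨fun p hp => (proj_isTreeMap m _).maps p (hmem _ hp le_rfl),
    fun p q hp hq hpq => ?_, fun p hp => (proj_isTreeMap m _).len p (hmem _ hp le_rfl)⟩
  rw [limProj, ← proj_eq_of_le hp (by omega) hpq.length_le]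
  exact (proj_isTreeMap m _).mono p q (hmem _ hp hpq.length_le) (hmem _ hq le_rfl) hpq

theorem limProj_playTabooFor {m : ℕ} {p : List X} (hp : p ∈ D.limT)
    (h : PlayTabooFor (D.S m) pl (.fin (D.limProj m p))) : PlayTabooFor D.limTree pl (.fin p) :=
  (playTabooFor_limTree_iff (n := m + p.length) (by omega)).2
    (proj_playTabooFor ((mem_limT_iff (by omega)).1 hp) h)

theorem proj_limProj {n : ℕ} {p : List X} (hp : p ∈ D.limT) :
    D.proj 0 n (D.limProj n p) = D.limProj 0 p := by
  have h := proj_proj (D := D) 0 n p.length p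
  rw [Nat.zero_add] at h
  rw [limProj, h, proj_eq_of_le hp (by omega) (Nat.le_add_left _ _)]
  rfl

theorem legalize_eq_of_le {p : List X} {n n' : ℕ} (hp : p.length ≤ n)
    (hn : n ≤ n') : legalize (D.S n').T k σ p = legalize (D.S n).T k σ p :=
  legalize_congr rfl fun _ => mem_T_iff_of_le (by simp; omega) hn

theorem legalize_isStrategy (hσ : IsStrategy D.limT pl σ) (n : ℕ) :
    IsStrategy (D.S n).T pl (legalize (D.S n).T k σ) := by
  intro p hp hnt hturn hcons
  by_cases hk : p.length < k
  · rw [legalize_of_lt hk]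
    have hcons' : PosConsistent pl σ p :=
      (posConsistent_congr fun r hr => legalize_of_lt (by omega)).1 hcons
    have hmove := hσ p ((mem_limT_iff (by omega)).2 hp)
      (by rwa [isTerminal_limT_iff (n := n) (by omega)]) hturn hcons'
    exact (mem_limT_iff (by simp; omega)).1 hmove
  · refine append_legalize_mem (by omega) ?_
    by_contra h
    exact hnt ⟨hp, fun a ha => h ⟨a, ha⟩⟩

noncomputable def push (D : CoveringSeq X k) (pl : Bool) (m : ℕ) :
    ℕ → (List X → X) → (List X → X)
  | 0, σ => σ
  | j + 1, σ => D.push pl m j ((D.C (m + j)).φ pl σ)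

theorem push_isStrategy {m j : ℕ} (hσ : IsStrategy (D.S (m + j)).T pl σ) :
    IsStrategy (D.S m).T pl (D.push pl m j σ) := by
  induction j generalizing σ with
  | zero => exact hσ
  | succ j ih => exact ih ((D.C (m + j)).φ_strategy pl σ hσ)

theorem push_congr {m j N : ℕ} {σ σ' : List X → X}
    (h : ∀ r : List X, r.length < N → σ r = σ' r) {q : List X} (hq : q.length < N) :
    D.push pl m j σ q = D.push pl m j σ' q := by
  induction j generalizing σ σ' with
  | zero => exact h q hq
  | succ j ih => exact ih ((D.C (m + j)).φ_local pl N σ σ' h)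

theorem push_of_length_lt {m j : ℕ} {q : List X} (hq : q.length < k + m + 1) :
    D.push pl m j σ q = σ q := by
  induction j generalizing σ with
  | zero => rfl
  | succ j ih => rw [push, ih, (D.isKCovering (m + j)).2.2.2.2 pl σ q (by omega)]

theorem push_succ (m j : ℕ) (σ : List X → X) :
    D.push pl m (j + 1) σ = (D.C m).φ pl (D.push pl (m + 1) j σ) := by
  induction j generalizing σ with
  | zero => rfl
  | succ j ih =>
    rw [push, ih]
    change _ = (D.C m).φ pl (D.push pl (m + 1) j ((D.C (m + 1 + j)).φ pl σ))
    rw [φ_congr (Nat.add_right_comm m 1 j)]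
    rfl

/-- The strategy map of the limit covering, at level `m`. Its value at `q` is computed from level
`m + q.length + 1` on, since the coverings above do not change strategies at positions of length
`≤ q.length`; `σ` is first made legal at that finite level. -/
noncomputable def limStrat (D : CoveringSeq X k) (pl : Bool) (m : ℕ) (σ : List X → X)
    (q : List X) : X :=
  D.push pl m (q.length + 1) (legalize (D.S (m + q.length + 1)).T k σ) q

theorem push_legalize {m j : ℕ} {q : List X} (hj : q.length + 1 ≤ j) :
    D.push pl m j (legalize (D.S (m + j)).T k σ) q = D.limStrat pl m σ q := by
  induction j, hj using Nat.le_induction with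
  | base => rfl
  | succ j hj ih =>
    rw [← ih, push]
    refine push_congr (N := q.length + 1) (fun r hr => ?_) (by omega)
    rw [(D.isKCovering (m + j)).2.2.2.2 pl _ r (by omega)]
    exact legalize_eq_of_le (by omega) (by omega)

theorem limStrat_eq_φ (m : ℕ) (σ : List X → X) :
    D.limStrat pl m σ = (D.C m).φ pl (D.limStrat pl (m + 1) σ) := by
  funext q
  rw [← push_legalize (j := q.length + 2) (by omega), push_succ,
    show m + (q.length + 2) = m + 1 + (q.length + 1) by omega]
  exact (D.C m).φ_local pl (q.length + 1) _ _ (fun r hr => push_legalize (by omega)) q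
    (by omega)

theorem limStrat_isStrategy {m : ℕ} (hσ : IsStrategy D.limT pl σ) :
    IsStrategy (D.S m).T pl (D.limStrat pl m σ) := by
  intro q hq hnt hturn hcons
  have hagree : ∀ r : List X, r.length < q.length + 1 →
      D.push pl m (q.length + 1) (legalize (D.S (m + (q.length + 1))).T k σ) r =
        D.limStrat pl m σ r :=
    fun r hr => push_legalize (by omega)
  rw [← hagree q (by omega)]
  exact push_isStrategy (legalize_isStrategy hσ _) q hq hnt hturn
    ((posConsistent_congr fun r hr => hagree r (by omega)).2 hcons)

theorem limStrat_congr {m N : ℕ} {σ σ' : List X → X}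
    (h : ∀ r : List X, r.length < N → σ r = σ' r) {q : List X} (hq : q.length < N) :
    D.limStrat pl m σ q = D.limStrat pl m σ' q :=
  push_congr (fun r hr => legalize_congr (h r hr) fun _ => Iff.rfl) hq

theorem limStrat_eq_legalize {m : ℕ} {q : List X} (hq : q.length ≤ k + m) :
    D.limStrat pl m σ q = legalize (D.S (m + q.length + 1)).T k σ q :=
  push_of_length_lt (by omega)

theorem limStrat_zero_of_lt {q : List X} (hq : q.length < k) :
    D.limStrat pl 0 σ q = σ q := by
  rw [limStrat_eq_legalize (by omega), legalize_of_lt hq]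

theorem limStrat_eq_of_mem {m : ℕ} {q : List X} (hq : q.length ≤ k + m)
    (hmove : q ++ [σ q] ∈ D.limT) : D.limStrat pl m σ q = σ q := by
  rw [limStrat_eq_legalize hq]
  exact legalize_of_mem ((mem_limT_iff (by simp; omega)).1 hmove)

theorem posConsistent_of_limStrat (hσ : IsStrategy D.limT pl σ) {m : ℕ} {p : List X}
    (hp : p ∈ D.limT) (hm : p.length ≤ k + m + 1)
    (h : PosConsistent pl (D.limStrat pl m σ) p) : PosConsistent pl σ p :=
  hσ.posConsistent_of_agree limT_isGameTree hp
    (fun _ hr hmove => limStrat_eq_of_mem (by omega) hmove) h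

theorem map_proj_eq {xs : ℕ → Play X} (hplay : ∀ m, IsPlay (D.S m).T (xs m))
    (hmap : ∀ m, (xs (m + 1)).map (D.C m).π = xs m) (i : ℕ) :
    (xs i).map (D.proj 0 i) = xs 0 := by
  induction i with
  | zero => exact Play.map_id _
  | succ i ih =>
    have hproj : D.proj 0 (i + 1) = fun p => D.proj 0 i ((D.C i).π p) := by
      funext p
      rw [proj, π_congr (Nat.zero_add i)]
    rw [hproj, Play.map_comp (D.C i).isTreeMap _ (hplay (i + 1)), hmap, ih]

theorem playTabooFor_of_le {xs : ℕ → Play X} (hplay : ∀ m, IsPlay (D.S m).T (xs m))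
    (hstep : ∀ m, (xs (m + 1)).map (D.C m).π = xs m ∨
      PlayTabooFor (D.S (m + 1)) pl (xs (m + 1)))
    {m M : ℕ} (hm : PlayTabooFor (D.S m) pl (xs m)) (hM : m ≤ M) :
    PlayTabooFor (D.S M) pl (xs M) := by
  induction M, hM using Nat.le_induction with
  | base => exact hm
  | succ M _ ih =>
    rcases hstep M with hmap | htab
    · exact (D.C M).playTabooFor_of_map_eq (hplay (M + 1)) hmap ih
    · exact htab

def IsLiftChain (D : CoveringSeq X k) (xs : ℕ → Play X) : Prop :=
  ∀ m, IsPlay (D.S m).T (xs m) ∧ ((xs (m + 1)).map (D.C m).π).le (xs m)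

theorem IsLiftChain.fin_le {xs : ℕ → Play X} (h : D.IsLiftChain xs) {i : ℕ} {r : List X}
    (hr : r ∈ (D.S i).T) (hri : (Play.fin r).le (xs i)) :
    (Play.fin (D.proj 0 i r)).le (xs 0) := by
  induction i generalizing r with
  | zero => exact hri
  | succ i ih =>
    have hle : (Play.fin ((D.C i).π r)).le (xs i) :=
      Play.le_trans (Play.map_le_map (D.C i).isTreeMap (fun p hp => Play.fin.inj hp ▸ hr)
        (h (i + 1)).1 hri) (h i).2
    have := ih ((D.C i).π_maps r hr) hle
    rwa [proj, π_congr (Nat.zero_add i)]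

theorem IsLiftChain.exists_eq_fin {xs : ℕ → Play X} (h : D.IsLiftChain xs) {m M : ℕ}
    {p : List X} (hp : xs m = .fin p) (hM : m ≤ M) : ∃ q, xs M = .fin q := by
  induction M, hM using Nat.le_induction with
  | base => exact ⟨p, hp⟩
  | succ M _ ih =>
    obtain ⟨q, hq⟩ := ih
    obtain ⟨r, hr⟩ := Play.exists_eq_fin_of_le_fin (hq ▸ (h M).2)
    obtain ⟨r', hr', -⟩ := Play.map_eq_fin hr
    exact ⟨r', hr'⟩

/-- Once finite, a lift chain is eventually constant: the lengths of its positions decrease,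
and a covering of a high level fixes positions of small length. -/
theorem IsLiftChain.eventually_eq_fin {xs : ℕ → Play X} (h : D.IsLiftChain xs) {m : ℕ}
    {p : List X} (hp : xs m = .fin p) :
    ∃ N ps, ps.length ≤ N ∧ ∀ M, N ≤ M → xs M = .fin ps := by
  choose q hq using fun i => h.exists_eq_fin hp (Nat.le_add_right m i)
  have hmem : ∀ i, q i ∈ (D.S (m + i)).T := fun i => by
    have := (h (m + i)).1
    rw [hq i] at this
    exact this.1
  have hpre : ∀ i, (D.C (m + i)).π (q (i + 1)) <+: q i := fun i => by
    have hsucc : xs (m + i + 1) = .fin (q (i + 1)) := hq (i + 1)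
    have := (h (m + i)).2
    rw [hsucc, hq i] at this
    exact this
  have hlen : ∀ i, (q (i + 1)).length ≤ (q i).length := fun i => by
    have := (hpre i).length_le
    rwa [(D.C (m + i)).π_len _ (hmem (i + 1))] at this
  obtain ⟨i₀, hi₀⟩ := WellFoundedLT.antitone_chain_condition 
    (antitone_nat_of_succ_le (f := fun i => (q i).length) hlen)
  set N := max i₀ (q i₀).length
  have hsucc : ∀ i, N ≤ i → q (i + 1) = q i := fun i hi => by
    have hl₁ := hi₀ i (by omega)
    have hl₂ := hi₀ (i + 1) (by omega)
    have hfix : (D.C (m + i)).π (q (i + 1)) = q (i + 1) :=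
      (D.isKCovering (m + i)).2.2.2.1 _ (hmem (i + 1)) (by omega)
    rw [← hfix]
    exact (hpre i).eq_of_length (by rw [hfix]; omega)
  have hconst : ∀ i, N ≤ i → q i = q N := fun i hi => by
    induction i, hi using Nat.le_induction with
    | base => rfl
    | succ i hi ih => rw [hsucc i hi, ih]
  refine ⟨m + N, q N, by rw [← hi₀ N (le_max_left _ _)]; omega, fun M hM => ?_⟩
  rw [show M = m + (M - m) by omega, hq, hconst _ (by omega)]

theorem exists_limit_branch {y : ℕ → ℕ → X} (hy : ∀ m, y m ∈ body (D.S m).T)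
    (hmap : ∀ m, bodyMap (D.C m).π (y (m + 1)) = y m) :
    ∃ yt ∈ body D.limT, (∀ m l, l ≤ m → prefixFn (y m) l = prefixFn yt l) ∧
      bodyMap (D.limProj 0) yt = y 0 := by
  have hstep : ∀ m n, n ≤ k + m → y (m + 1) n = y m n := fun m n hn => by
    rw [← hmap m, bodyMap, (D.isKCovering m).2.2.2.1 _ (hy (m + 1) (n + 1)) (by simp; omega),
      getD_prefixFn _ (Nat.lt_succ_self n)]
  have hstab : ∀ n m, n ≤ m → y m n = y n n := fun n m hm => by
    induction m, hm using Nat.le_induction with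
    | base => rfl
    | succ m _ ih => rw [hstep m n (by omega), ih]
  have hpre : ∀ m l, l ≤ m → prefixFn (y m) l = prefixFn (fun n => y n n) l := fun m l hl =>
    List.ext_getElem (by simp) fun i hi _ => by
      simp only [getElem_prefixFn]
      exact hstab i m (by simp at hi; omega)
  have hbody : (fun n => y n n) ∈ body D.limT := fun l => by
    change _ ∈ (D.S (prefixFn _ l).length).T
    rw [length_prefixFn, ← hpre l l le_rfl]
    exact hy l l
  have hproj : ∀ j, bodyMap (D.proj 0 j) (y j) = y 0 := fun j =>
    Play.inf.inj (map_proj_eq (xs := fun m => .inf (y m)) hy (fun m => congrArg _ (hmap m)) j)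
  refine ⟨_, hbody, hpre, funext fun n => ?_⟩
  have hy' : y (n + 1) ∈ body (D.S (0 + (n + 1))).T := by rw [Nat.zero_add]; exact hy _
  rw [bodyMap, limProj, length_prefixFn, ← hpre (n + 1) (n + 1) le_rfl,
    ← (proj_isTreeMap 0 (n + 1)).prefixFn_bodyMap hy', hproj,
    getD_prefixFn _ (Nat.lt_succ_self n)]

theorem exists_lift_of_eq_fin (hσ : IsStrategy D.limT pl σ) {xs : ℕ → Play X}
    (hchain : D.IsLiftChain xs) (hcons : ∀ m, PlayConsistent pl (D.limStrat pl m σ) (xs m))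
    (hstep : ∀ m, (xs (m + 1)).map (D.C m).π = xs m ∨
      PlayTabooFor (D.S (m + 1)) pl (xs (m + 1)))
    {m : ℕ} {p : List X} (hp : xs m = .fin p) :
    ∃ xt : Play X, IsPlay D.limT xt ∧ PlayConsistent pl σ xt ∧
      (xt.map (D.limProj 0)).le (xs 0) ∧
      (xt.map (D.limProj 0) = xs 0 ∨ PlayTabooFor D.limTree pl xt) := by
  obtain ⟨N, ps, hpsN, hN⟩ := hchain.eventually_eq_fin hp
  have hterm : IsTerminal (D.S N).T ps := by
    have := (hchain N).1
    rwa [hN N le_rfl] at this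
  have hps : ps ∈ D.limT := (mem_limT_iff (by omega)).2 hterm.1
  have hproj : D.proj 0 N ps = D.limProj 0 ps := proj_eq_of_le hps (by omega) hpsN
  refine ⟨.fin ps, (isTerminal_limT_iff (by omega)).2 hterm, ?_, ?_, ?_⟩
  · have hconsN := hcons N
    rw [hN N le_rfl] at hconsN
    exact posConsistent_of_limStrat hσ hps (by omega) hconsN
  · change (Play.fin (D.limProj 0 ps)).le (xs 0)
    rw [← hproj]
    exact hchain.fin_le hterm.1 (by rw [hN N le_rfl]; exact Play.le_refl _)
  · by_cases htab : ∃ m, PlayTabooFor (D.S m) pl (xs m)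
    · obtain ⟨mt, hmt⟩ := htab
      have htabM := playTabooFor_of_le (fun m => (hchain m).1) hstep hmt (le_max_left mt N)
      rw [hN _ (le_max_right _ _)] at htabM
      exact .inr ((playTabooFor_limTree_iff (by omega)).2 htabM)
    · simp only [not_exists] at htab
      have hmap := map_proj_eq (fun m => (hchain m).1)
        (fun m => (hstep m).resolve_right (htab (m + 1))) N
      rw [hN N le_rfl] at hmap
      exact .inl (hproj ▸ hmap : Play.fin (D.limProj 0 ps) = xs 0)

theorem exists_lift_of_forall_ne_fin (hσ : IsStrategy D.limT pl σ) {xs : ℕ → Play X}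
    (hchain : D.IsLiftChain xs) (hcons : ∀ m, PlayConsistent pl (D.limStrat pl m σ) (xs m))
    (hinf : ∀ m p, xs m ≠ .fin p) :
    ∃ xt : Play X, IsPlay D.limT xt ∧ PlayConsistent pl σ xt ∧
      (xt.map (D.limProj 0)).le (xs 0) ∧
      (xt.map (D.limProj 0) = xs 0 ∨ PlayTabooFor D.limTree pl xt) := by
  have hex : ∀ m, ∃ y, xs m = .inf y := fun m => by
    cases h : xs m with
    | fin p => exact (hinf m p h).elim
    | inf y => exact ⟨y, rfl⟩
  choose y hy using hex
  have hyb : ∀ m, y m ∈ body (D.S m).T := fun m => by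
    have := (hchain m).1
    rwa [hy m] at this
  have hmap : ∀ m, bodyMap (D.C m).π (y (m + 1)) = y m := fun m => by
    have := (hchain m).2
    rwa [hy, hy] at this
  obtain ⟨yt, hyt, hpre, hmap₀⟩ := exists_limit_branch hyb hmap
  have hx₀ : (Play.inf yt).map (D.limProj 0) = xs 0 := by rw [hy 0]; exact congrArg _ hmap₀
  refine ⟨.inf yt, hyt, ?_, hx₀ ▸ Play.le_refl _, .inl hx₀⟩
  refine branchConsistent_iff_forall_posConsistent.2 fun l => ?_
  have hcons' := hcons l
  rw [hy l] at hcons'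
  have hconsl := branchConsistent_iff_forall_posConsistent.1 hcons' l
  rw [hpre l l le_rfl] at hconsl
  exact posConsistent_of_limStrat hσ (hyt l) (by simp; omega) hconsl

/-- Lift the play successively through the levels: the lifts either become finite, hence
eventually constant, or stay infinite and converge to a branch of the limit tree. -/
theorem exists_lift (hσ : IsStrategy D.limT pl σ) {x : Play X} (hx : IsPlay (D.S 0).T x)
    (hcons : PlayConsistent pl (D.limStrat pl 0 σ) x) :
    ∃ xt : Play X, IsPlay D.limT xt ∧ PlayConsistent pl σ xt ∧
      (xt.map (D.limProj 0)).le x ∧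
      (xt.map (D.limProj 0) = x ∨ PlayTabooFor D.limTree pl xt) := by
  obtain ⟨xs, rfl, hxs⟩ := exists_seq_of_forall_exists
    (P := fun m w => IsPlay (D.S m).T w ∧ PlayConsistent pl (D.limStrat pl m σ) w)
    (R := fun m w w' => (w'.map (D.C m).π).le w ∧
      (w'.map (D.C m).π = w ∨ PlayTabooFor (D.S (m + 1)) pl w'))
    ⟨hx, hcons⟩ fun m w ⟨hw, hcw⟩ => by
      rw [limStrat_eq_φ] at hcw
      obtain ⟨w', hw', hcw', hle, hstep⟩ :=
        (D.C m).lifting pl _ (limStrat_isStrategy hσ) w hw hcw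
      exact ⟨w', ⟨hw', hcw'⟩, hle, hstep⟩
  have hchain : D.IsLiftChain xs := fun m => ⟨(hxs m).1.1, (hxs m).2.1⟩
  by_cases hfin : ∃ m p, xs m = .fin p
  · obtain ⟨m, p, hp⟩ := hfin
    exact exists_lift_of_eq_fin hσ hchain (fun m => (hxs m).1.2) (fun m => (hxs m).2.2) hp
  · simp only [not_exists] at hfin
    exact exists_lift_of_forall_ne_fin hσ hchain (fun m => (hxs m).1.2) hfin

noncomputable def limCovering (D : CoveringSeq X k) : Covering D.limTree (D.S 0) where
  π := D.limProj 0
  π_maps := (limProj_isTreeMap 0).maps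
  π_mono := (limProj_isTreeMap 0).mono
  π_len := (limProj_isTreeMap 0).len
  π_tabooI _ hp h := limProj_playTabooFor (pl := true) hp h
  π_tabooII _ hp h := limProj_playTabooFor (pl := false) hp h
  φ pl σ := D.limStrat pl 0 σ
  φ_strategy _ _ hσ := limStrat_isStrategy hσ
  φ_local _ _ _ _ h _ hq := limStrat_congr h hq
  lifting _ _ hσ _ hx hcons := exists_lift hσ hx hcons

theorem limCovering_isKCovering : IsKCovering k D.limCovering :=
  ⟨fun _ _ => mem_limT_iff (by omega), fun _ _ => mem_limI_iff (by omega),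
    fun _ _ => mem_limII_iff (by omega), fun _ hp hl => proj_eq_self hp hl,
    fun _ _ _ hl => limStrat_zero_of_lt hl⟩

theorem unravels_limCovering {n : ℕ} {E : Set (ℕ → X)}
    (h : RelClopen (D.S n).T (bodyMap (D.proj 0 n) ⁻¹' E ∩ body (D.S n).T)) :
    Unravels D.limCovering E := by
  have hpull := h.preimage_bodyMap (limProj_isTreeMap n)
  rwa [(limProj_isTreeMap n).preimage_comp,
    preimage_bodyMap_congr fun p hp => proj_limProj (n := n) hp] at hpull

end CoveringSeq

section Unraveling

variable {X : Type*} [Nonempty X]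

theorem Unravels.of_compl {Y : Type*} {Tc : TabooTree Y} {M : TabooTree X} {C : Covering Tc M}
    {A : Set (ℕ → X)} (h : Unravels C Aᶜ) : Unravels C A := by
  have := RelClopen.compl_inter_body h
  rwa [← Set.preimage_compl, compl_compl] at this

/-- Unravel the sets one after the other, the `n`-th (pulled back to the current tree) by a
`(k + n + 1)`-covering, and pass to the inverse limit. -/
theorem exists_covering_unravels_forall (k : ℕ) (M : TabooTree X) (E : ℕ → Set (ℕ → X))
    (step : ∀ n (S : TabooTree X) (g : List X → List X), ∃ (St : TabooTree X)
      (C : Covering St S), IsKCovering (k + n + 1) C ∧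
        Unravels C (bodyMap g ⁻¹' E n ∩ body S.T)) :
    ∃ (Tw : TabooTree X) (Cw : Covering Tw M), IsKCovering k Cw ∧ ∀ n, Unravels Cw (E n) := by
  obtain ⟨f, hf₀, hf⟩ := exists_seq_of_forall_exists (P := fun _ _ => True)
    (R := fun n (a b : TabooTree X × (List X → List X)) => ∃ C : Covering b.1 a.1,
      IsKCovering (k + n + 1) C ∧ Unravels C (bodyMap a.2 ⁻¹' E n ∩ body a.1.T) ∧
        b.2 = fun p => a.2 (C.π p))
    (a := (M, fun p => p)) trivial fun n a _ => by
      obtain ⟨St, C, hK, hU⟩ := step n a.1 a.2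
      exact ⟨(St, fun p => a.2 (C.π p)), trivial, C, hK, hU, rfl⟩
  choose C hK hU hg using fun n => (hf n).2
  let D : CoveringSeq X k := ⟨fun n => (f n).1, C, hK⟩
  have hproj : ∀ n, (f n).2 = D.proj 0 n := by
    intro n
    induction n with
    | zero => rw [hf₀]; rfl
    | succ n ih =>
      funext p
      rw [hg n, ih, CoveringSeq.proj, CoveringSeq.π_congr (Nat.zero_add n)]
  have hD₀ : D.S 0 = M := congrArg Prod.fst hf₀
  subst hD₀
  refine ⟨D.limTree, D.limCovering, CoveringSeq.limCovering_isKCovering,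
    fun n => CoveringSeq.unravels_limCovering (n := n + 1) ?_⟩
  have hUn := hU n
  rwa [Unravels, (C n).isTreeMap.preimage_comp, ← hg n, hproj] at hUn

end Unraveling

theorem stmt11_general {X : Type*} [Nonempty X] (α : Ordinal.{0})
    (ih : ∀ β : Ordinal.{0}, 1 ≤ β → β < α →
      ∀ (S : TabooTree X) (A : Set (ℕ → X)), A ⊆ body S.T →
        (∃ B, SigmaMem X β B ∧ A = B ∩ body S.T) →
        ∀ k : ℕ, ∃ (St : TabooTree X) (C : Covering St S), IsKCovering k C ∧ Unravels C A)
    (hopen : ∀ (S : TabooTree X) (A : Set (ℕ → X)), A ⊆ body S.T → RelOpen S.T A →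
      ∀ k : ℕ, ∃ (St : TabooTree X) (C : Covering St S), IsKCovering k C ∧ Unravels C A)
    (M : TabooTree X) (A : Set (ℕ → X))
    (hsig : ∃ B, SigmaMem X α B ∧ A = B ∩ body M.T) (k : ℕ) :
    ∃ (Tc : TabooTree X) (C : Covering Tc M), IsKCovering k C ∧ Unravels C A := by
  obtain ⟨B, hB, rfl⟩ := hsig
  cases hB with
  | isOpen _ _ hBopen => exact hopen M _ Set.inter_subset_right ⟨B, hBopen, rfl⟩ k
  | iUnion _ f β hβ₁ hβα hf =>
    obtain ⟨Tw, Cw, hKw, hUw⟩ := exists_covering_unravels_forall k M (fun n => (f n)ᶜ)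
      fun n S g => ih (β n) (hβ₁ n) (hβα n) S _ Set.inter_subset_right
        ⟨_, (hf n).preimage (continuous_bodyMap g), rfl⟩ (k + n + 1)
    have hopenA :
        RelOpen Tw.T (bodyMap Cw.π ⁻¹' ((⋃ n, f n) ∩ body M.T) ∩ body Tw.T) := by
      rw [Cw.isTreeMap.preimage_inter_body, Set.preimage_iUnion]
      exact relOpen_iUnion_inter_body fun n => (hUw n).of_compl.1
    obtain ⟨Tc, C, hK, hU⟩ := hopen Tw _ Set.inter_subset_right hopenA k
    exact ⟨Tc, C.comp Cw, hK.comp hKw, hU.comp⟩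

/-- the successor step of the induction: if every set of class `Σ⁰_β`
(`1 ≤ β < α`) in the branch space of any game tree with taboos can be unraveled by a
`k`-covering for every `k`, and likewise every open set can be so unraveled, then every
set of class `Σ⁰_α` in the branch space of any game tree with taboos can be unraveled by
a `k`-covering, for every `k`. -/
theorem stmt11 {X : Type*} [Nonempty X] (α : Ordinal.{0}) (hα : 1 ≤ α)
    (ih : ∀ β : Ordinal.{0}, 1 ≤ β → β < α →
      ∀ (S : TabooTree X) (A : Set (ℕ → X)), A ⊆ body S.T →
        (∃ B, SigmaMem X β B ∧ A = B ∩ body S.T) →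
        ∀ k : ℕ, ∃ (St : TabooTree X) (C : Covering St S), IsKCovering k C ∧ Unravels C A)
    (hopen : ∀ (S : TabooTree X) (A : Set (ℕ → X)), A ⊆ body S.T → RelOpen S.T A →
      ∀ k : ℕ, ∃ (St : TabooTree X) (C : Covering St S), IsKCovering k C ∧ Unravels C A)
    (M : TabooTree X) (A : Set (ℕ → X)) (hA : A ⊆ body M.T)
    (hsig : ∃ B, SigmaMem X α B ∧ A = B ∩ body M.T) (k : ℕ) :
    ∃ (Tc : TabooTree X) (C : Covering Tc M), IsKCovering k C ∧ Unravels C A :=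
  stmt11_general α ih hopen M A hsig k
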